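/- arXiv:2602.03736 — 2 statements merged into one kernel-verified Lean document; each statement's English description precedes it below -/
import Mathlib

section
/- (Stronger Central Sets Theorem, noncommutative case) Let (S,·) be a semigroup and A ⊆ S a central set. Then there exist m : 𝒫_f(ℕ→S) → ℕ, α with α(F) ∈ S^{m(F)+1}, and τ with τ(F) ∈ 𝒥_{m(F)}, such that: (1) if F ⊊ G then τ(F)(m(F)) < τ(G)(1); (2) whenever n ∈ ℕ, G₁ ⊊ G₂ ⊊ ⋯ ⊊ G_n are finite nonempty sets of sequences and f_i ∈ G_i for each i, then ∏_{i=1}^n x(m(G_i), α(G_i), τ(G_i), f_i) ∈ A. -/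
/-- `A` is thick: every finite nonempty set can be right-translated into `A`. -/
def Thick {S : Type*} [Semigroup S] (A : Set S) : Prop :=
  ∀ E : Finset S, E.Nonempty → ∃ x : S, ∀ e ∈ E, e * x ∈ A

def Syndetic {S : Type*} [Semigroup S] (A : Set S) : Prop :=
  ∃ F : Finset S, F.Nonempty ∧ ∀ s : S, ∃ t ∈ F, t * s ∈ A

def PiecewiseSyndetic {S : Type*} [Semigroup S] (A : Set S) : Prop :=
  ∃ F : Finset S, F.Nonempty ∧ Thick {s : S | ∃ t ∈ F, t * s ∈ A}

def ThickAdd {S : Type*} [AddSemigroup S] (A : Set S) : Prop :=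
  ∀ E : Finset S, E.Nonempty → ∃ x : S, ∀ e ∈ E, e + x ∈ A

def SyndeticAdd {S : Type*} [AddSemigroup S] (A : Set S) : Prop :=
  ∃ F : Finset S, F.Nonempty ∧ ∀ s : S, ∃ t ∈ F, t + s ∈ A

def PiecewiseSyndeticAdd {S : Type*} [AddSemigroup S] (A : Set S) : Prop :=
  ∃ F : Finset S, F.Nonempty ∧ ThickAdd {s : S | ∃ t ∈ F, t + s ∈ A}

/-- Sum of `f t` over a nonempty finite `H ⊆ ℕ` in a commutative semigroup
(junk value `f 0` when `H = ∅`). -/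
def fSum {S : Type*} [AddCommSemigroup S] (H : Finset ℕ) (f : ℕ → S) : S :=
  match Finset.sort H (· ≤ ·) with
  | [] => f 0
  | a :: l => l.foldl (fun s t => s + f t) (f a)

/-- `J`-set in a commutative semigroup. -/
def JSetAdd {S : Type*} [AddCommSemigroup S] (A : Set S) : Prop :=
  ∀ F : Finset (ℕ → S), F.Nonempty →
    ∃ (a : S) (H : Finset ℕ), H.Nonempty ∧ ∀ f ∈ F, a + fSum H f ∈ A

/-- `x(m,a,t,f) = a(0)·f(t 0)·a(1)·f(t 1)⋯f(t (m-1))·a(m)` (0-indexed version of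
`(∏_{j=1}^m a(j)·f(t(j)))·a(m+1)`). -/
def xNC {S : Type*} [Semigroup S] (m : ℕ) (a : ℕ → S) (t : ℕ → ℕ) (f : ℕ → S) : S :=
  (List.range m).foldl (fun s j => s * f (t j) * a (j + 1)) (a 0)

/-- `J`-set in a not-necessarily-commutative semigroup. -/
def JSetNC {S : Type*} [Semigroup S] (A : Set S) : Prop :=
  ∀ G : Finset (ℕ → S), G.Nonempty →
    ∃ (m : ℕ) (a : ℕ → S) (t : ℕ → ℕ), 1 ≤ m ∧
      (∀ i j : ℕ, i < j → j < m → t i < t j) ∧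
      ∀ f ∈ G, xNC m a t f ∈ A

/-- `v 0 + v 1 + ⋯ + v r` in an additive semigroup. -/
def seqSum {S : Type*} [AddSemigroup S] (v : ℕ → S) (r : ℕ) : S :=
  (List.range r).foldl (fun s j => s + v (j + 1)) (v 0)

/-- `v 0 * v 1 * ⋯ * v r` in a semigroup. -/
def seqProd {S : Type*} [Semigroup S] (v : ℕ → S) (r : ℕ) : S :=
  (List.range r).foldl (fun s j => s * v (j + 1)) (v 0)

/-- Collectionwise piecewise syndetic family (multiplicative). -/
def CollectionwisePS {S : Type*} [Semigroup S] (𝒜 : Set (Set S)) : Prop :=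
  ∃ (G : Finset (Set S) → Finset S) (x : Finset (Set S) → Finset S → S),
    ∀ (F : Finset S) (ℱ ℋ : Finset (Set S)), ℱ.Nonempty → ↑ℋ ⊆ 𝒜 → ℱ ⊆ ℋ →
      ∀ y ∈ F, ∃ t ∈ G ℱ, t * (y * x ℋ F) ∈ ⋂₀ (ℱ : Set (Set S))

/-- Collectionwise piecewise syndetic family (additive). -/
def CollectionwisePSAdd {S : Type*} [AddSemigroup S] (𝒜 : Set (Set S)) : Prop :=
  ∃ (G : Finset (Set S) → Finset S) (x : Finset (Set S) → Finset S → S),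
    ∀ (F : Finset S) (ℱ ℋ : Finset (Set S)), ℱ.Nonempty → ↑ℋ ⊆ 𝒜 → ℱ ⊆ ℋ →
      ∀ y ∈ F, ∃ t ∈ G ℱ, t + (y + x ℋ F) ∈ ⋂₀ (ℱ : Set (Set S))

/-- Central set (multiplicative), via the combinatorial characterization. -/
def Central {S : Type*} [Semigroup S] (A : Set S) : Prop :=
  ∃ (I : Type) (C : I → Set S), Nonempty I ∧
    (∀ N, C N ⊆ A) ∧
    (∀ N M : I, ∃ P : I, C P ⊆ C N ∧ C P ⊆ C M) ∧
    (∀ N : I, ∀ y ∈ C N, ∃ M : I, C M ⊆ {s : S | y * s ∈ C N}) ∧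
    CollectionwisePS {B : Set S | ∃ N : I, B = C N}

/-- Central set (additive), via the combinatorial characterization. -/
def CentralAdd {S : Type*} [AddSemigroup S] (A : Set S) : Prop :=
  ∃ (I : Type) (C : I → Set S), Nonempty I ∧
    (∀ N, C N ⊆ A) ∧
    (∀ N M : I, ∃ P : I, C P ⊆ C N ∧ C P ⊆ C M) ∧
    (∀ N : I, ∀ y ∈ C N, ∃ M : I, C M ⊆ {s : S | y + s ∈ C N}) ∧
    CollectionwisePSAdd {B : Set S | ∃ N : I, B = C N}

/-!
Every member `C N` of a family witnessing centrality is piecewise syndetic, hence, by the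
Hales–Jewett theorem, a `J`-set. The blocks `m(F), α(F), τ(F)` are chosen by recursion on `F`,
together with an index `N(F)`: only finitely many products `y` come from chains
`G₀ ⊊ ⋯ ⊊ Gₙ ⊊ F`, each lies in `C N(G₀)`, so directedness and `C M ⊆ y⁻¹ C N(G₀)` give one
`N(F)` with `y · C N(F) ⊆ C N(G₀)` for all of them; the block at `F` is then a `J`-set witness
for `F` inside `C N(F)` that starts after all earlier blocks. Hence every chain product
lies in some `C N(G₀) ⊆ A`.
-/

open Function Set

theorem StrictMonoOn.update_Iio {t : ℕ → ℕ} {m k : ℕ} (ht : StrictMonoOn t (Iio m))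
    (htk : ∀ i < m, t i < k) : StrictMonoOn (update t m k) (Iio (m + 1)) := by
  intro i hi j hj hij
  simp only [mem_Iio] at hi hj
  rw [update_of_ne (by omega)]
  rcases Nat.lt_succ_iff_lt_or_eq.mp hj with hj | rfl
  · rw [update_of_ne (by omega)]; exact ht (show i < m by omega) hj hij
  · rw [update_self]; exact htk i hij

section xNC

variable {S : Type*} [Semigroup S]

theorem xNC_succ (m : ℕ) (a : ℕ → S) (t : ℕ → ℕ) (f : ℕ → S) :
    xNC (m + 1) a t f = xNC m a t f * f (t m) * a (m + 1) := by
  simp [xNC, List.range_succ]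

theorem seqProd_succ (v : ℕ → S) (n : ℕ) : seqProd v (n + 1) = seqProd v n * v (n + 1) := by
  simp [seqProd, List.range_succ]

theorem xNC_congr {m : ℕ} {a a' : ℕ → S} {t t' : ℕ → ℕ} {f f' : ℕ → S}
    (ha : ∀ j ≤ m, a j = a' j) (hf : ∀ i < m, f (t i) = f' (t' i)) :
    xNC m a t f = xNC m a' t' f' := by
  induction m with
  | zero => simp [xNC, ha 0 le_rfl]
  | succ k ih =>
    rw [xNC_succ, xNC_succ, ih (fun j hj => ha j (by omega)) (fun i hi => hf i (by omega)),
      hf k k.lt_succ_self, ha (k + 1) le_rfl]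

theorem xNC_succ_update (m k : ℕ) (a : ℕ → S) (t : ℕ → ℕ) (f : ℕ → S) (c : S) :
    xNC (m + 1) (update a (m + 1) c) (update t m k) f = xNC m a t f * f k * c := by
  rw [xNC_succ, update_self, update_self,
    xNC_congr (a' := a) (t' := t) (f' := f) (fun j hj => update_of_ne (by omega) _ _)
      (fun i hi => by rw [update_of_ne (by omega)])]

theorem xNC_mul (m : ℕ) (a : ℕ → S) (t : ℕ → ℕ) (f : ℕ → S) (c : S) :
    xNC m a t f * c = xNC m (update a m (a m * c)) t f := by
  cases m with
  | zero => simp [xNC]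
  | succ k =>
    have hpre : xNC k (update a (k + 1) (a (k + 1) * c)) t f = xNC k a t f :=
      xNC_congr (fun j hj => update_of_ne (show j ≠ k + 1 by omega) _ _) (fun _ _ => rfl)
    rw [xNC_succ, xNC_succ, update_self, hpre, mul_assoc]

theorem mul_xNC (m : ℕ) (a : ℕ → S) (t : ℕ → ℕ) (f : ℕ → S) (c : S) :
    c * xNC m a t f = xNC m (update a 0 (c * a 0)) t f := by
  induction m with
  | zero => simp [xNC]
  | succ k ih => rw [xNC_succ, xNC_succ, ← ih, update_of_ne k.succ_ne_zero]; simp only [mul_assoc]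

/-- `σ j = some b` freezes the `j`-th letter to `b`; the letters with `σ j = none` stay free. -/
theorem exists_xNC_eq_xNC_id_getD (a : ℕ → S) (σ : ℕ → Option S) :
    ∀ n, (∃ j < n, σ j = none) → ∃ m a' t, 1 ≤ m ∧ StrictMonoOn t (Iio m) ∧
      (∀ i < m, t i < n) ∧ ∀ f, xNC n a id (fun j => (σ j).getD (f j)) = xNC m a' t f
  | 0, ⟨j, hj, _⟩ => absurd hj j.not_lt_zero
  | k + 1, hσ => by
    by_cases hfree : ∃ j < k, σ j = none
    · obtain ⟨m, a', t, hm, ht, htk, heq⟩ := exists_xNC_eq_xNC_id_getD a σ k hfree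
      cases hσk : σ k with
      | none =>
        refine ⟨m + 1, update a' (m + 1) (a (k + 1)), update t m k, by omega,
          ht.update_Iio htk, fun i hi => ?_, fun f => ?_⟩
        · rcases Nat.lt_succ_iff_lt_or_eq.mp hi with hi | rfl
          · rw [update_of_ne (by omega)]; exact (htk i hi).trans k.lt_succ_self
          · rw [update_self]; exact k.lt_succ_self
        · rw [xNC_succ_update, xNC_succ, heq, id, hσk, Option.getD_none]
      | some b =>
        refine ⟨m, update a' m (a' m * (b * a (k + 1))), t, hm, ht,
          fun i hi => (htk i hi).trans k.lt_succ_self, fun f => ?_⟩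
        rw [← xNC_mul, xNC_succ, heq, id, hσk, Option.getD_some, mul_assoc]
    · push Not at hfree
      obtain ⟨j, hj, hσj⟩ := hσ
      have hσk : σ k = none := by
        obtain rfl : j = k := by by_contra hne; exact hfree j (by omega) hσj
        exact hσj
      -- all letters before `k` are frozen, so the prefix is a constant
      refine ⟨1, fun i => if i = 0 then xNC k a id (fun j => (σ j).getD (a 0)) else a (k + 1),
        fun _ => k, le_rfl, fun i hi j hj hij => by simp only [mem_Iio] at hi hj; omega, by simp,
        fun f => ?_⟩
      rw [xNC_succ, xNC_congr (a' := a) (t' := id) (f' := fun j => (σ j).getD (a 0))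
        (fun _ _ => rfl) (fun i hi => ?_)]
      · simp [xNC, hσk]
      · obtain ⟨b, hb⟩ := Option.ne_none_iff_exists'.mp (hfree i hi)
        simp [hb]

end xNC

theorem Combinatorics.Line.exists_mono_in_fin_dimension (α : Type*) [Finite α] (κ : Type*)
    [Finite κ] : ∃ n, ∀ C : (Fin n → α) → κ, ∃ l : Line α (Fin n), l.IsMono C := by
  obtain ⟨ι, _, hι⟩ := exists_mono_in_high_dimension α κ
  let e := Fintype.equivFin ι
  refine ⟨Fintype.card ι, fun C => ?_⟩
  obtain ⟨l, c, hc⟩ := hι fun x => C (x ∘ e.symm)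
  obtain ⟨i, hi⟩ := l.proper
  exact ⟨⟨l.idxFun ∘ e.symm, e i, by simpa using hi⟩, c, hc⟩

section JSet

variable {S : Type*} [Semigroup S]

theorem CollectionwisePS.piecewiseSyndetic {𝒜 : Set (Set S)} (h𝒜 : CollectionwisePS 𝒜)
    {B : Set S} (hB : B ∈ 𝒜) : PiecewiseSyndetic B := by
  obtain ⟨G, x, hGx⟩ := h𝒜
  have hB' : ↑({B} : Finset (Set S)) ⊆ 𝒜 := by simpa using hB
  have hmem : ∀ E : Finset S, ∀ e ∈ E, ∃ t ∈ G {B}, t * (e * x {B} E) ∈ B := fun E e he => by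
    simpa using hGx E {B} {B} (Finset.singleton_nonempty B) hB' subset_rfl e he
  obtain ⟨t, ht, -⟩ := hmem {x ∅ ∅} _ (Finset.mem_singleton_self _)
  exact ⟨G {B}, ⟨t, ht⟩, fun E _ => ⟨x {B} E, hmem E⟩⟩

/-- Piecewise syndetic sets are `J`-sets: colour the words `w : Fin n → Gf` by which translate
`t⁻¹B` contains `Y(w)·x`, where `Y(w)` reads its `j`-th letter from the sequence `w j`; on a
monochromatic Hales–Jewett line the fixed letters freeze into constants. -/
theorem PiecewiseSyndetic.jSetNC {B : Set S} (hB : PiecewiseSyndetic B) : JSetNC B := by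
  classical
  obtain ⟨H, ⟨s₀, -⟩, hthick⟩ := hB
  intro Gf hGf
  have := hGf.to_subtype
  obtain ⟨n, hHJ⟩ := Combinatorics.Line.exists_mono_in_fin_dimension Gf H
  let word : (Fin n → Gf) → ℕ → S := fun w j => if hj : j < n then (w ⟨j, hj⟩ : ℕ → S) j else s₀
  let Y : (Fin n → Gf) → S := fun w => xNC n (fun _ => s₀) id (word w)
  obtain ⟨x, hx⟩ := hthick (Finset.univ.image Y) (Finset.univ_nonempty.image Y)
  choose col hcol using fun w => hx (Y w) (Finset.mem_image_of_mem Y (Finset.mem_univ w))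
  obtain ⟨l, c, hc⟩ := hHJ fun w => ⟨col w, (hcol w).1⟩
  let σ : ℕ → Option S := fun j =>
    if hj : j < n then (l.idxFun ⟨j, hj⟩).map fun g : Gf => (g : ℕ → S) j else some s₀
  have hword : ∀ g : Gf, word (l g) = fun j => (σ j).getD ((g : ℕ → S) j) := by
    intro g; funext j
    by_cases hj : j < n
    · cases hl : l.idxFun ⟨j, hj⟩ <;> simp [word, σ, hj, hl]
    · simp [word, σ, hj]
  obtain ⟨i, hi⟩ := l.proper
  obtain ⟨m, a, t, hm, ht, -, hY⟩ :=
    exists_xNC_eq_xNC_id_getD (fun _ => s₀) σ n ⟨i, i.2, by simp [σ, hi]⟩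
  obtain ⟨a', ha'⟩ : ∃ a', ∀ g, (c : S) * (xNC m a t g * x) = xNC m a' t g :=
    ⟨_, fun g => by rw [xNC_mul, mul_xNC]⟩
  refine ⟨m, a', t, hm, fun i j hij hj => ht (hij.trans hj) hj hij, fun g hg => ?_⟩
  have hmem : col (l ⟨g, hg⟩) * (xNC n _ id (word (l ⟨g, hg⟩)) * x) ∈ B := (hcol _).2
  rwa [show col (l ⟨g, hg⟩) = c from congrArg Subtype.val (hc ⟨g, hg⟩), hword, hY, ha'] at hmem

theorem JSetNC.exists_le_xNC_mem [Nonempty S] {B : Set S} (hB : JSetNC B)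
    (F : Finset (ℕ → S)) (K : ℕ) :
    ∃ m a t, 1 ≤ m ∧ StrictMonoOn t (Iio m) ∧ K ≤ t 0 ∧ ∀ f ∈ F, xNC m a t f ∈ B := by
  classical
  let shift : (ℕ → S) → ℕ → S := fun f i => f (i + K)
  obtain ⟨m, a, t, hm, ht, hmem⟩ :=
    hB (insert (fun _ => Classical.arbitrary S) (F.image shift)) (Finset.insert_nonempty _ _)
  refine ⟨m, a, (· + K) ∘ t, hm, fun i hi j hj hij => ?_, Nat.le_add_left _ _, fun f hf => ?_⟩
  · exact Nat.add_lt_add_right (ht i j hij hj) K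
  · exact hmem (shift f) (Finset.mem_insert_of_mem (Finset.mem_image_of_mem shift hf))

end JSet

theorem Finset.exists_forall_of_strongRecursion {α β : Type*} [Nonempty β]
    (P : (Finset α → β) → Finset α → Prop)
    (hP : ∀ d d' F, (∀ G ⊆ F, d G = d' G) → P d F → P d' F)
    (extend : ∀ d F, (∀ G ⊂ F, P d G) → ∃ d', (∀ G ⊂ F, d' G = d G) ∧ P d' F) :
    ∃ d, ∀ F, P d F := by
  classical
  let below (F : Finset α) (prev : ∀ G ⊂ F, β) : Finset α → β := fun G =>
    if hG : G ⊂ F then prev G hG else Classical.arbitrary β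
  let step (F : Finset α) (prev : ∀ G ⊂ F, β) : β :=
    if h : ∃ d', (∀ G ⊂ F, d' G = below F prev G) ∧ P d' F then h.choose F
    else Classical.arbitrary β
  let d : Finset α → β := Finset.strongInduction step
  refine ⟨d, fun F => ?_⟩
  induction F using Finset.strongInductionOn with
  | _ F ih =>
    have hex : ∃ d', (∀ G ⊂ F, d' G = below F (fun G _ => d G) G) ∧ P d' F := by
      refine extend _ F fun G hG => hP d _ G (fun G' hG' => ?_) (ih G hG)
      simp only [below, dif_pos (ssubset_of_subset_of_ssubset hG' hG)]
    have hdF : d F = hex.choose F := by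
      rw [show d F = step F (fun G _ => d G) from Finset.strongInduction_eq _ _]
      exact dif_pos hex
    refine hP _ d F (fun G hG => ?_) hex.choose_spec.2
    obtain rfl | hG := hG.eq_or_ssubset
    · exact hdF.symm
    · rw [hex.choose_spec.1 G hG]; exact dif_pos hG

namespace CentralSets

variable {S : Type*} [Semigroup S] {I : Type*}

/-- The data `m(F), α(F), τ(F)` of the theorem, together with an index `N(F)` of the family
witnessing centrality. -/
structure Block (S I : Type*) where
  m : ℕ
  α : ℕ → S
  τ : ℕ → ℕ
  N : I

namespace Block

instance [Nonempty S] [Nonempty I] : Nonempty (Block S I) :=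
  ⟨⟨0, Classical.arbitrary _, id, Classical.arbitrary I⟩⟩

def x (b : Block S I) (f : ℕ → S) : S := xNC b.m b.α b.τ f

def last (b : Block S I) : ℕ := b.τ (b.m - 1)

end Block

/-- `IsChainProd d F y N`: `y = ∏ x(d G₀, f₀) ⋯ x(d Gₙ, fₙ)` for a chain `G₀ ⊊ ⋯ ⊊ Gₙ = F` with
`fᵢ ∈ Gᵢ`, and `N = N(G₀)`. -/
inductive IsChainProd (d : Finset (ℕ → S) → Block S I) : Finset (ℕ → S) → S → I → Prop
  | single {F f} : f ∈ F → IsChainProd d F ((d F).x f) (d F).N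
  | snoc {G F y N f} : G ⊂ F → IsChainProd d G y N → f ∈ F → IsChainProd d F (y * (d F).x f) N

theorem IsChainProd.of_eqOn {d d' : Finset (ℕ → S) → Block S I} {F : Finset (ℕ → S)} {y : S}
    {N : I} (h : IsChainProd d F y N) (hdd' : ∀ G ⊆ F, d G = d' G) : IsChainProd d' F y N := by
  induction h with
  | single hf => rw [hdd' _ subset_rfl]; exact .single hf
  | snoc hGF _ hf ih =>
    rw [hdd' _ subset_rfl]
    exact .snoc hGF (ih fun G' hG' => hdd' G' (hG'.trans hGF.subset)) hf

theorem finite_setOf_isChainProd (d : Finset (ℕ → S) → Block S I) (F : Finset (ℕ → S)) :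
    {p : S × I | IsChainProd d F p.1 p.2}.Finite := by
  classical
  induction F using Finset.strongInductionOn with
  | _ F ih =>
    refine (((F.finite_toSet.image fun f => ((d F).x f, (d F).N))).union
      (F.ssubsets.finite_toSet.biUnion fun G hG => ((ih G (Finset.mem_ssubsets.mp hG)).prod
        F.finite_toSet).image fun q => (q.1.1 * (d F).x q.2, q.1.2))).subset ?_
    rintro ⟨y, N⟩ (⟨hf⟩ | ⟨hGF, hG, hf⟩)
    · exact .inl ⟨_, hf, rfl⟩
    · exact .inr (mem_biUnion (Finset.mem_ssubsets.mpr hGF) ⟨((_, _), _), ⟨hG, hf⟩, rfl⟩)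

theorem isChainProd_seqProd (d : Finset (ℕ → S) → Block S I) {n : ℕ}
    {g : ℕ → Finset (ℕ → S)} {f : ℕ → ℕ → S} (hg : ∀ i j, i < j → j ≤ n → g i ⊂ g j)
    (hf : ∀ i ≤ n, f i ∈ g i) :
    IsChainProd d (g n) (seqProd (fun i => (d (g i)).x (f i)) n) (d (g 0)).N := by
  induction n with
  | zero => exact .single (hf 0 le_rfl)
  | succ k ih =>
    rw [seqProd_succ]
    exact .snoc (hg k (k + 1) k.lt_succ_self le_rfl)
      (ih (fun i j hij hj => hg i j hij (by omega)) (fun i hi => hf i (by omega)))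
      (hf (k + 1) le_rfl)

structure IsAdmissible (C : I → Set S) (d : Finset (ℕ → S) → Block S I) (F : Finset (ℕ → S)) :
    Prop where
  one_le_m : 1 ≤ (d F).m
  strictMonoOn_τ : StrictMonoOn (d F).τ (Iio (d F).m)
  last_lt : ∀ G ⊂ F, (d G).last < (d F).τ 0
  chainProd_mem : ∀ y N, IsChainProd d F y N → y ∈ C N

theorem IsAdmissible.of_eqOn {C : I → Set S} {d d' : Finset (ℕ → S) → Block S I}
    {F : Finset (ℕ → S)} (hdd' : ∀ G ⊆ F, d G = d' G) (h : IsAdmissible C d F) :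
    IsAdmissible C d' F := by
  obtain ⟨h₁, h₂, h₃, h₄⟩ := h
  rw [hdd' F subset_rfl] at h₁ h₂ h₃
  refine ⟨h₁, h₂, fun G hG => hdd' G hG.subset ▸ h₃ G hG, fun y N hy => h₄ y N ?_⟩
  exact hy.of_eqOn fun G hG => (hdd' G hG).symm

theorem IsAdmissible.extend [Nonempty S] [Nonempty I] {C : I → Set S}
    (hdir : Directed (· ⊇ ·) C) (hstar : ∀ N, ∀ y ∈ C N, ∃ M, C M ⊆ {s | y * s ∈ C N})
    (hJ : ∀ N, JSetNC (C N)) (d : Finset (ℕ → S) → Block S I) (F : Finset (ℕ → S))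
    (hd : ∀ G ⊂ F, IsAdmissible C d G) :
    ∃ d', (∀ G ⊂ F, d' G = d G) ∧ IsAdmissible C d' F := by
  classical
  let W := ⋃ G ∈ F.ssubsets, {p : S × I | IsChainProd d G p.1 p.2}
  have hW : W.Finite := F.ssubsets.finite_toSet.biUnion fun G _ => finite_setOf_isChainProd d G
  have hWC : ∀ p ∈ W, p.1 ∈ C p.2 := by
    simp only [W, mem_iUnion₂, Finset.mem_ssubsets]
    exact fun p ⟨G, hG, hp⟩ => (hd G hG).chainProd_mem _ _ hp
  choose! M hM using fun p hp => hstar p.2 p.1 (hWC p hp)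
  obtain ⟨N, hN⟩ := hdir.finset_le (hW.toFinset.image M)
  obtain ⟨m, a, t, hm, ht, hlast, hmem⟩ :=
    (hJ N).exists_le_xNC_mem F (F.ssubsets.sup fun G => (d G).last + 1)
  let b : Block S I := ⟨m, a, t, N⟩
  have hF : update d F b F = b := update_self ..
  have hd' : ∀ G ⊂ F, update d F b G = d G := fun G hG => update_of_ne hG.ne _ _
  refine ⟨update d F b, hd', ⟨by rw [hF]; exact hm, by rw [hF]; exact ht,
    fun G hG => ?_, fun y N' hy => ?_⟩⟩
  · have hle := Finset.le_sup (f := fun G => (d G).last + 1) (Finset.mem_ssubsets.mpr hG)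
    rw [hd' G hG, hF]
    exact Nat.lt_of_lt_of_le (Nat.lt_succ_self _) (hle.trans hlast)
  · cases hy with
    | single hf => rw [hF]; exact hmem _ hf
    | @snoc G _ y _ f hGF hG hf =>
      have hp : (y, N') ∈ W := by
        simp only [W, mem_iUnion₂, Finset.mem_ssubsets]
        exact ⟨G, hGF, hG.of_eqOn fun G' hG' => hd' G' (hG'.trans_ssubset hGF)⟩
      rw [hF]
      exact hM _ hp (hN _ (Finset.mem_image_of_mem M (hW.mem_toFinset.mpr hp)) (hmem f hf))

theorem exists_forall_isAdmissible [Nonempty S] [Nonempty I] {C : I → Set S}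
    (hdir : Directed (· ⊇ ·) C) (hstar : ∀ N, ∀ y ∈ C N, ∃ M, C M ⊆ {s | y * s ∈ C N})
    (hJ : ∀ N, JSetNC (C N)) : ∃ d : Finset (ℕ → S) → Block S I, ∀ F, IsAdmissible C d F :=
  Finset.exists_forall_of_strongRecursion (IsAdmissible C) (fun _ _ _ h => .of_eqOn h)
    (IsAdmissible.extend hdir hstar hJ)

end CentralSets

/-- the stronger Central Sets Theorem for arbitrary semigroups.
Chains `G₁ ⊊ ⋯ ⊊ G_{n+1}` are coded by `g : ℕ → Finset (ℕ → S)` restricted to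
indices `≤ n`; `τ F (m F - 1)` is the last entry of the tuple `τ F`. -/
theorem strongerCentralSetsTheorem {S : Type*} [Semigroup S]
    (A : Set S) (hA : Central A) :
    ∃ (m : Finset (ℕ → S) → ℕ) (α : Finset (ℕ → S) → ℕ → S)
      (τ : Finset (ℕ → S) → ℕ → ℕ),
      (∀ F : Finset (ℕ → S), F.Nonempty → 1 ≤ m F) ∧
      (∀ F : Finset (ℕ → S), F.Nonempty →
        ∀ i j : ℕ, i < j → j < m F → τ F i < τ F j) ∧
      (∀ F G : Finset (ℕ → S), F.Nonempty → F ⊂ G →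
        τ F (m F - 1) < τ G 0) ∧
      (∀ (n : ℕ) (g : ℕ → Finset (ℕ → S)) (f : ℕ → ℕ → S),
        (g 0).Nonempty → (∀ i j : ℕ, i < j → j ≤ n → g i ⊂ g j) →
        (∀ i : ℕ, i ≤ n → f i ∈ g i) →
        seqProd (fun i => xNC (m (g i)) (α (g i)) (τ (g i)) (f i)) n ∈ A) := by
  obtain ⟨I, C, hI, hCA, hdir, hstar, hcw⟩ := hA
  have hPS : ∀ N, PiecewiseSyndetic (C N) := fun N => hcw.piecewiseSyndetic ⟨N, rfl⟩
  obtain ⟨-, ⟨s, -⟩, -⟩ := hPS (Classical.arbitrary I)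
  have : Nonempty S := ⟨s⟩
  obtain ⟨d, hd⟩ := CentralSets.exists_forall_isAdmissible hdir hstar fun N => (hPS N).jSetNC
  refine ⟨fun F => (d F).m, fun F => (d F).α, fun F => (d F).τ, fun F _ => (hd F).one_le_m,
    fun F _ i j hij hj => (hd F).strictMonoOn_τ (hij.trans hj) hj hij,
    fun F G _ hFG => (hd G).last_lt F hFG, fun n g f _ hg hf => ?_⟩
  exact hCA _ ((hd (g n)).chainProd_mem _ _ (CentralSets.isChainProd_seqProd d hg hf))
end

section
/- (Central Sets Theorem, commutative, finitely many sequences) Let (S,+) be an infinite commutative semigroup, A a central subset of S, and for each l ∈ ℕ let ⟨y_{l,n}⟩_{n=1}^∞ be a sequence in S. Then there exist sequences ⟨a_n⟩ in S and ⟨H_n⟩ in 𝒫_f(ℕ) with max H_n < min H_{n+1} for all n, such that for every f : ℕ → ℕ with f(n) ≤ n for all n, all finite sums FS(⟨a_n + Σ_{t∈H_n} y_{f(n),t}⟩_{n=1}^∞) are contained in A. -/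
/-!
A central set lies in an idempotent ultrafilter `p` all of whose members are J-sets. Indeed, the
collectionwise piecewise syndetic family `{C N}` is contained in an ultrafilter of a minimal left
ideal of `βS`; members of such ultrafilters are piecewise syndetic, hence J-sets by Hales–Jewett.
The ultrafilters containing every `C N` and only J-sets then form a compact subsemigroup of `βS`,
which contains an idempotent.

Given such `p`, choose `a n`, `H n` and sets `B n ∈ p`, `B 0 ⊆ A`, inductively: `B n` is a
`⋆`-set (`-x + B n ∈ p` for `x ∈ B n`), the J-set property of `B n` yields `a n` and `H n` above
`H (n - 1)` with `a n + ∑_{t ∈ H n} y l t ∈ B n` for all `l ≤ n`, and `B (n + 1)` is `B n`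
intersected with the translates of `B n` by these finitely many sums. A finite sum over `F` then
lies in `B (min F) ⊆ A`, by induction on `F`.
-/

open Finset

section FSum

variable {S : Type*} [AddCommSemigroup S]

theorem coe_foldl_add (f : ℕ → S) (l : List ℕ) (b : S) :
    ((l.foldl (fun s t => s + f t) b : S) : WithZero S) =
      b + (l.map fun t => (f t : WithZero S)).sum := by
  induction l generalizing b with
  | nil => simp
  | cons a l ih =>
    simp only [List.foldl_cons, ih, List.map_cons, List.sum_cons, WithZero.coe_add, add_assoc]

theorem coe_fSum {H : Finset ℕ} (hH : H.Nonempty) (f : ℕ → S) :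
    ((fSum H f : S) : WithZero S) = ∑ t ∈ H, (f t : WithZero S) := by
  have hsort : ∑ t ∈ H, (f t : WithZero S) =
      ((H.sort (· ≤ ·)).map fun t => (f t : WithZero S)).sum := by
    rw [Finset.sum_eq_multiset_sum, ← Finset.sort_eq H (· ≤ ·)]
    rfl
  rw [hsort, fSum]
  obtain ⟨t, ht⟩ := hH
  rcases hs : H.sort (· ≤ ·) with _ | ⟨a, l⟩
  · simpa [hs] using (Finset.mem_sort (· ≤ ·)).2 ht
  · simp [coe_foldl_add]

theorem fSum_singleton (f : ℕ → S) (t : ℕ) : fSum {t} f = f t :=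
  WithZero.coe_injective <| by rw [coe_fSum (singleton_nonempty t), sum_singleton]

theorem fSum_insert {s : Finset ℕ} (hs : s.Nonempty) {a : ℕ} (ha : a ∉ s) (f : ℕ → S) :
    fSum (insert a s) f = f a + fSum s f :=
  WithZero.coe_injective <| by
    rw [WithZero.coe_add, coe_fSum (insert_nonempty a s), coe_fSum hs, sum_insert ha]

theorem fSum_image {H : Finset ℕ} (hH : H.Nonempty) {e : ℕ → ℕ} (he : Set.InjOn e H)
    (f : ℕ → S) : fSum (H.image e) f = fSum H (f ∘ e) :=
  WithZero.coe_injective <| by rw [coe_fSum (hH.image e), coe_fSum hH, sum_image he]; rfl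

theorem WithZero.exists_coe_eq_add_coe (c : WithZero S) (x : S) :
    ∃ a : S, (a : WithZero S) = c + x := by
  induction c using WithZero.recZeroCoe with
  | zero => exact ⟨x, (zero_add _).symm⟩
  | coe c => exact ⟨c + x, rfl⟩

theorem WithZero.exists_coe_eq_sum {ι : Type*} {s : Finset ι} (hs : s.Nonempty) (g : ι → S) :
    ∃ b : S, (b : WithZero S) = ∑ i ∈ s, (g i : WithZero S) := by
  classical
  induction hs using Finset.Nonempty.cons_induction with
  | singleton a => exact ⟨g a, by simp⟩
  | cons a s ha hs ih =>
    obtain ⟨b, hb⟩ := ih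
    exact ⟨g a + b, by rw [sum_cons, ← hb, WithZero.coe_add]⟩

end FSum

theorem Combinatorics.Line.sum_apply {α ι M : Type*} [Fintype ι] [AddCommMonoid M]
    (l : Combinatorics.Line α ι) (φ : ι → α → M) (x x₀ : α) :
    ∑ i, φ i (l x i) =
      ∑ i with l.idxFun i = none, φ i x + ∑ i with l.idxFun i ≠ none, φ i (l x₀ i) := by
  classical
  rw [← sum_filter_add_sum_filter_not univ (fun i => l.idxFun i = none)]
  congr 1
  · exact sum_congr rfl fun i hi => by rw [l.apply_none _ _ (mem_filter.1 hi).2]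
  · refine sum_congr rfl fun i hi => ?_
    obtain ⟨a, ha⟩ := Option.ne_none_iff_exists'.1 (mem_filter.1 hi).2
    rw [l.apply_some ha, l.apply_some ha]

section JSet

variable {S : Type*} [AddCommSemigroup S]

theorem JSetAdd.of_translate {B : Set S} (s : S) (h : JSetAdd {z | s + z ∈ B}) : JSetAdd B := by
  intro F hF
  obtain ⟨a, H, hH, hmem⟩ := h F hF
  exact ⟨s + a, H, hH, fun f hf => by rw [add_assoc]; exact hmem f hf⟩

theorem JSetAdd.exists_gt {B : Set S} (hB : JSetAdd B) {F : Finset (ℕ → S)} (hF : F.Nonempty)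
    (m : ℕ) :
    ∃ (a : S) (H : Finset ℕ), H.Nonempty ∧ (∀ t ∈ H, m < t) ∧ ∀ f ∈ F, a + fSum H f ∈ B := by
  classical
  obtain ⟨a, H, hH, hmem⟩ := hB (F.image fun f t => f (t + (m + 1))) (hF.image _)
  refine ⟨a, H.image (· + (m + 1)), hH.image _, by simp only [mem_image]; omega, fun f hf => ?_⟩
  rw [fSum_image hH (add_left_injective _).injOn]
  exact hmem _ (mem_image_of_mem _ hf)

theorem PiecewiseSyndeticAdd.jSetAdd {A : Set S} (hA : PiecewiseSyndeticAdd A) : JSetAdd A := by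
  classical
  obtain ⟨Y, hY, hthick⟩ := hA
  intro F hF
  have : Nonempty F := hF.coe_sort
  have : Nonempty Y := hY.coe_sort
  obtain ⟨ι, _, hHJ⟩ := Combinatorics.Line.exists_mono_in_high_dimension F Y
  have : Nonempty ι := ⟨(hHJ fun _ => Classical.arbitrary Y).choose.proper.choose⟩
  let e : ι ↪ ℕ := (Fintype.equivFin ι).toEmbedding.trans Fin.valEmbedding
  -- a word `w` is read as `∑ i, w i (e i)`; along a line `l` this is `c + ∑ t ∈ H, f t`, where
  -- `H` is the image of the moving coordinates and `c` collects the fixed ones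
  choose v hv using fun w : ι → F =>
    WithZero.exists_coe_eq_sum univ_nonempty fun i => (w i : ℕ → S) (e i)
  obtain ⟨x, hx⟩ := hthick (univ.image v) (univ_nonempty.image v)
  choose color hcolorY hcolorA using fun w => hx (v w) (mem_image_of_mem v (mem_univ w))
  obtain ⟨l, t, hl⟩ := hHJ fun w => ⟨color w, hcolorY w⟩
  obtain ⟨f₀⟩ := ‹Nonempty F›
  obtain ⟨a, ha⟩ := WithZero.exists_coe_eq_add_coe
    (((t : S) : WithZero S) + ∑ i with l.idxFun i ≠ none, ((l f₀ i : ℕ → S) (e i) : WithZero S)) x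
  let H := ({i | l.idxFun i = none} : Finset ι).map e
  have hH : H.Nonempty := ⟨_, mem_map_of_mem e (mem_filter.2 ⟨mem_univ _, l.proper.choose_spec⟩)⟩
  refine ⟨a, H, hH, fun f hf => ?_⟩
  have hsum : a + fSum H f = t + (v (l ⟨f, hf⟩) + x) := WithZero.coe_injective <| by
    rw [WithZero.coe_add, WithZero.coe_add, WithZero.coe_add, hv, ha, coe_fSum hH, sum_map,
      Combinatorics.Line.sum_apply l (fun i (g : F) => ((g : ℕ → S) (e i) : WithZero S)) _ f₀]
    abel
  rw [hsum, ← congrArg Subtype.val (hl ⟨f, hf⟩)]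
  exact hcolorA _

end JSet

section LeftIdeal

variable {M : Type*} [AddSemigroup M] [TopologicalSpace M]

def IsClosedAddLeftIdeal (L : Set M) : Prop :=
  L.Nonempty ∧ IsClosed L ∧ ∀ p q, q ∈ L → p + q ∈ L

variable [CompactSpace M] [T2Space M]

theorem isClosedAddLeftIdeal_range_add_right (hcont : ∀ r : M, Continuous (· + r)) (q : M) :
    IsClosedAddLeftIdeal (Set.range (· + q)) :=
  ⟨⟨q + q, q, rfl⟩, (isCompact_range (hcont q)).isClosed,
    by rintro p _ ⟨r, rfl⟩; exact ⟨p + r, add_assoc p r q⟩⟩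

theorem IsClosedAddLeftIdeal.exists_minimal (hcont : ∀ r : M, Continuous (· + r)) {R : Set M}
    (hR : IsClosedAddLeftIdeal R) :
    ∃ L ⊆ R, IsClosedAddLeftIdeal L ∧ ∀ q ∈ L, ∀ p ∈ L, ∃ r, r + q = p := by
  obtain ⟨L, hLR, hL⟩ : ∃ L ⊆ R, Minimal IsClosedAddLeftIdeal L := by
    refine zorn_superset_nonempty {L | IsClosedAddLeftIdeal L} (fun c hc hchain hcne => ?_) R hR
    refine ⟨⋂₀ c, ⟨?_, isClosed_sInter fun L hL => (hc hL).2.1, fun p q hq => ?_⟩,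
      fun L hL => Set.sInter_subset_of_mem hL⟩
    · have := hcne.coe_sort
      rw [Set.sInter_eq_iInter]
      exact IsCompact.nonempty_iInter_of_directed_nonempty_isCompact_isClosed _
        (IsChain.directedOn (r := fun s t : Set M => s ⊇ t) hchain.symm).directed_val
        (fun L => (hc L.2).1) (fun L => (hc L.2).2.1.isCompact) (fun L => (hc L.2).2.1)
    · exact Set.mem_sInter.2 fun L hL => (hc hL).2.2 p q (Set.mem_sInter.1 hq L hL)
  refine ⟨L, hLR, hL.prop, fun q hq p hp => ?_⟩
  have hsub : Set.range (· + q) ⊆ L := by rintro _ ⟨r, rfl⟩; exact hL.prop.2.2 r q hq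
  exact hL.le_of_le (isClosedAddLeftIdeal_range_add_right hcont q) hsub hp

end LeftIdeal

attribute [local instance] Ultrafilter.add Ultrafilter.addSemigroup

namespace Ultrafilter

variable {S : Type*} [AddSemigroup S]

theorem mem_add_iff {U V : Ultrafilter S} {A : Set S} :
    A ∈ U + V ↔ {m | {m' | m + m' ∈ A} ∈ V} ∈ U :=
  Iff.rfl

theorem mem_pure_add_iff {e : S} {V : Ultrafilter S} {A : Set S} :
    A ∈ (pure e : Ultrafilter S) + V ↔ {m' | e + m' ∈ A} ∈ V :=
  mem_pure

theorem piecewiseSyndeticAdd_of_mem {L : Set (Ultrafilter S)} (hL : IsClosedAddLeftIdeal L)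
    (hmin : ∀ q ∈ L, ∀ p ∈ L, ∃ r, r + q = p) {p : Ultrafilter S} (hp : p ∈ L) {A : Set S}
    (hA : A ∈ p) : PiecewiseSyndeticAdd A := by
  have hcover : L ⊆ ⋃ t : S, {q | {m' | t + m' ∈ A} ∈ q} := fun q hq => by
    obtain ⟨r, rfl⟩ := hmin q hq p hp
    obtain ⟨t, ht⟩ := nonempty_of_mem (mem_add_iff.1 hA)
    exact Set.mem_iUnion.2 ⟨t, ht⟩
  obtain ⟨Y, hY⟩ :=
    hL.2.1.isCompact.elim_finite_subcover _ (fun t => ultrafilter_isOpen_basic _) hcover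
  refine ⟨Y, ?_, fun E _ => ?_⟩
  · obtain ⟨t, ht, -⟩ := Set.mem_iUnion₂.1 (hY hL.1.some_mem)
    exact ⟨t, ht⟩
  -- `pure e + p` lies in `L`, so one of the finitely many translates `-t + A` belongs to it
  have hE : ∀ e : S, {m' | e + m' ∈ {s | ∃ t ∈ Y, t + s ∈ A}} ∈ p := fun e => by
    obtain ⟨t, ht, hmem⟩ := Set.mem_iUnion₂.1 (hY (hL.2.2 (pure e) p hp))
    exact Filter.mem_of_superset (mem_pure_add_iff.1 hmem) fun m' hm' => ⟨t, ht, hm'⟩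
  obtain ⟨x, hx⟩ := nonempty_of_mem ((Filter.biInter_finset_mem E).2 fun e _ => hE e)
  exact ⟨x, fun e he => Set.mem_iInter₂.1 hx e he⟩

end Ultrafilter

namespace CollectionwisePSAdd

variable {S : Type*} [AddSemigroup S] {𝒜 : Set (Set S)}

theorem exists_ultrafilter_translate_mem (h𝒜 : CollectionwisePSAdd 𝒜) :
    ∃ q₀ : Ultrafilter S, ∀ ℱ : Finset (Set S), ℱ.Nonempty → ↑ℱ ⊆ 𝒜 →
      ∀ r : Ultrafilter S, ∃ t : S, {z | t + z ∈ ⋂₀ (ℱ : Set (Set S))} ∈ r + q₀ := by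
  classical
  obtain ⟨G, x, hGx⟩ := h𝒜
  let E : Finset (Set S) → S → Set S := fun ℱ y => {z | ∃ t ∈ G ℱ, t + (y + z) ∈ ⋂₀ ↑ℱ}
  obtain ⟨q₀, hq₀⟩ := Ultrafilter.exists_ultrafilter_of_finite_inter_nonempty
    {B | ∃ ℱ y, ℱ.Nonempty ∧ ↑ℱ ⊆ 𝒜 ∧ B = E ℱ y} fun T hT => by
      choose ℱ y hℱ hℱ𝒜 hEq using fun B (hB : B ∈ T) => hT hB
      let ℋ := T.attach.sup fun B => ℱ B.1 B.2
      have hℋ : ↑ℋ ⊆ 𝒜 := by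
        intro C hC
        obtain ⟨B, -, hB⟩ := mem_sup.1 hC
        exact hℱ𝒜 B.1 B.2 hB
      refine ⟨x ℋ (T.attach.image fun B => y B.1 B.2), Set.mem_sInter.2 fun B hB => ?_⟩
      rw [hEq B hB]
      exact hGx _ _ ℋ (hℱ B hB) hℋ (le_sup (f := fun B => ℱ B.1 B.2) (mem_attach T ⟨B, hB⟩))
        _ (mem_image_of_mem _ (mem_attach T ⟨B, hB⟩))
  refine ⟨q₀, fun ℱ hℱ hℱ𝒜 r => ?_⟩
  have hunion : (⋃ t ∈ (G ℱ : Set S), {z | t + z ∈ ⋂₀ (ℱ : Set (Set S))}) ∈ r + q₀ :=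
    Ultrafilter.mem_add_iff.2 <| Filter.univ_mem' fun y => Filter.mem_of_superset
      (hq₀ ⟨ℱ, y, hℱ, hℱ𝒜, rfl⟩) fun z ⟨t, ht, hz⟩ => Set.mem_biUnion ht hz
  obtain ⟨t, -, ht⟩ := (Ultrafilter.finite_biUnion_mem_iff (G ℱ).finite_toSet).1 hunion
  exact ⟨t, ht⟩

theorem exists_ultrafilter_piecewiseSyndeticAdd (h𝒜 : CollectionwisePSAdd 𝒜) :
    ∃ p : Ultrafilter S, (∀ B ∈ 𝒜, B ∈ p) ∧ ∀ B ∈ p, PiecewiseSyndeticAdd B := by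
  classical
  obtain ⟨q₀, hq₀⟩ := h𝒜.exists_ultrafilter_translate_mem
  obtain ⟨L, hLq₀, hL, hmin⟩ := (isClosedAddLeftIdeal_range_add_right
    Ultrafilter.continuous_add_left q₀).exists_minimal Ultrafilter.continuous_add_left
  have hfinite : ∀ ℱ : Finset 𝒜, (L ∩ ⋂ B ∈ ℱ, {p | B.1 ∈ p}).Nonempty := by
    intro ℱ
    obtain ⟨u, hu⟩ := hL.1
    rcases ℱ.eq_empty_or_nonempty with rfl | hℱ
    · exact ⟨u, hu, by simp⟩
    obtain ⟨r, rfl⟩ := hLq₀ hu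
    obtain ⟨t, ht⟩ := hq₀ (ℱ.image Subtype.val) (hℱ.image _) (by simp) r
    refine ⟨pure t + (r + q₀), hL.2.2 _ _ hu, Set.mem_iInter₂.2 fun B hB => ?_⟩
    have hmem : ⋂₀ (ℱ.image Subtype.val : Set (Set S)) ∈ pure t + (r + q₀) :=
      Ultrafilter.mem_pure_add_iff.2 ht
    exact (pure t + (r + q₀)).mem_of_superset hmem
      (Set.sInter_subset_of_mem (mem_image_of_mem _ hB))
  obtain ⟨p, hpL, hp⟩ := hL.2.1.isCompact.inter_iInter_nonempty _
    (fun B => ultrafilter_isClosed_basic _) hfinite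
  exact ⟨p, fun B hB => Set.mem_iInter.1 hp ⟨B, hB⟩,
    fun B hB => Ultrafilter.piecewiseSyndeticAdd_of_mem hL hmin hpL hB⟩

end CollectionwisePSAdd

theorem Ultrafilter.isClosed_setOf_forall_mem_imp {S : Type*} (P : Set S → Prop) :
    IsClosed {q : Ultrafilter S | ∀ B ∈ q, P B} := by
  have : {q : Ultrafilter S | ∀ B ∈ q, P B} = ⋂ (B : Set S) (_ : ¬ P B), {q | B ∈ q}ᶜ := by
    ext q
    simp only [Set.mem_ofPred_eq, Set.mem_iInter, Set.mem_compl_iff]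
    exact forall_congr' fun B => not_imp_not.symm
  rw [this]
  exact isClosed_biInter fun B _ => (ultrafilter_isOpen_basic B).isClosed_compl

theorem CentralAdd.exists_idempotent_jSetAdd {S : Type*} [AddCommSemigroup S] {A : Set S}
    (hA : CentralAdd A) : ∃ p : Ultrafilter S, p + p = p ∧ A ∈ p ∧ ∀ B ∈ p, JSetAdd B := by
  obtain ⟨I, C, ⟨N₀⟩, hCA, -, htrans, hC⟩ := hA
  obtain ⟨p₀, hp₀C, hp₀⟩ := hC.exists_ultrafilter_piecewiseSyndeticAdd
  let T : Set (Ultrafilter S) := {q | ∀ N, C N ∈ q} ∩ {q | ∀ B ∈ q, JSetAdd B}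
  have hT : IsClosed T := by
    refine IsClosed.inter ?_ (Ultrafilter.isClosed_setOf_forall_mem_imp _)
    simpa only [Set.ofPred_forall] using isClosed_iInter fun N => ultrafilter_isClosed_basic (C N)
  have hTadd : ∀ q₁ ∈ T, ∀ q₂ ∈ T, q₁ + q₂ ∈ T := by
    rintro q₁ ⟨hC₁, -⟩ q₂ ⟨hC₂, hJ₂⟩
    refine ⟨fun N => Ultrafilter.mem_add_iff.2 (Filter.mem_of_superset (hC₁ N) fun s hs => ?_),
      fun B hB => ?_⟩
    · obtain ⟨M, hM⟩ := htrans N s hs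
      exact Filter.mem_of_superset (hC₂ M) hM
    · obtain ⟨s, hs⟩ := Ultrafilter.nonempty_of_mem (Ultrafilter.mem_add_iff.1 hB)
      exact (hJ₂ _ hs).of_translate s
  obtain ⟨p, hpT, hp⟩ := exists_idempotent_in_compact_add_subsemigroup
    Ultrafilter.continuous_add_left T
    ⟨p₀, fun N => hp₀C _ ⟨N, rfl⟩, fun B hB => (hp₀ B hB).jSetAdd⟩ hT.isCompact hTadd
  exact ⟨p, hp, Filter.mem_of_superset (hpT.1 N₀) (hCA N₀), hpT.2⟩

theorem fSum_mem_of_forall_add_mem {S : Type*} [AddCommSemigroup S] {B : ℕ → Set S}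
    (hB : Antitone B) {v : ℕ → S} (hv : ∀ n, v n ∈ B n)
    (hvB : ∀ n, B (n + 1) ⊆ {z | v n + z ∈ B n}) {F : Finset ℕ} (hF : F.Nonempty) {m : ℕ}
    (hm : ∀ n ∈ F, m ≤ n) : fSum F v ∈ B m := by
  classical
  induction F using Finset.induction_on_min generalizing m with
  | empty => exact absurd hF not_nonempty_empty
  | insert a s has ih =>
    have hma : B a ⊆ B m := hB (hm a (mem_insert_self a s))
    rcases s.eq_empty_or_nonempty with rfl | hs
    · simpa only [insert_empty, fSum_singleton] using hma (hv a)
    rw [fSum_insert hs (fun h => (has a h).false)]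
    exact hma (hvB a (ih hs fun n hn => has n hn))

theorem exists_seq_of_exists_succ {σ : Type*} {P : ℕ → σ → Prop} {R : ℕ → σ → σ → Prop}
    (h₀ : ∃ s, P 0 s) (h : ∀ n s, P n s → ∃ s', P (n + 1) s' ∧ R n s s') :
    ∃ s : ℕ → σ, ∀ n, P n (s n) ∧ R n (s n) (s (n + 1)) := by
  choose s₀ hs₀ using h₀
  choose next hnextP hnextR using h
  let seq : ∀ n, {s // P n s} := fun n =>
    Nat.rec ⟨s₀, hs₀⟩ (fun n s => ⟨next n s.1 s.2, hnextP n s.1 s.2⟩) n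
  exact ⟨fun n => (seq n).1, fun n => ⟨(seq n).2, hnextR n _ _⟩⟩

namespace Ultrafilter

section AddSemigroup

variable {S : Type*} [AddSemigroup S]

/-- For idempotent `p` and `A ∈ p`, the set `A⋆ = {x ∈ A | -x + A ∈ p}` has this property. -/
def IsStarSet (p : Ultrafilter S) (B : Set S) : Prop :=
  B ∈ p ∧ ∀ s ∈ B, {z | s + z ∈ B} ∈ p

variable {p : Ultrafilter S}

theorem isStarSet_star (hp : p + p = p) {A : Set S} (hA : A ∈ p) :
    p.IsStarSet {x ∈ A | {z | x + z ∈ A} ∈ p} := by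
  have hidem : ∀ {B : Set S}, B ∈ p → {x | {z | x + z ∈ B} ∈ p} ∈ p := fun hB => by
    rwa [← hp] at hB
  refine ⟨Filter.inter_mem hA (hidem hA), fun x ⟨_, hx⟩ => ?_⟩
  filter_upwards [hx, hidem hx] with z hz hz'
  exact ⟨hz, by simpa only [Set.mem_ofPred_eq, add_assoc] using hz'⟩

theorem IsStarSet.inter_biInter {B : Set S} (hB : p.IsStarSet B) {X : Finset S}
    (hX : ↑X ⊆ B) : p.IsStarSet (B ∩ ⋂ s ∈ X, {z | s + z ∈ B}) := by
  obtain ⟨hBp, hBstar⟩ := hB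
  refine ⟨Filter.inter_mem hBp ((Filter.biInter_finset_mem X).2 fun s hs => hBstar s (hX hs)),
    fun x ⟨hxB, hxX⟩ => ?_⟩
  have hxX' := Set.mem_iInter₂.1 hxX
  filter_upwards [hBstar x hxB,
    (Filter.biInter_finset_mem X).2 fun s hs => hBstar (s + x) (hxX' s hs)] with z hz hzX
  refine ⟨hz, Set.mem_iInter₂.2 fun s hs => ?_⟩
  simpa only [Set.mem_ofPred_eq, add_assoc] using Set.mem_iInter₂.1 hzX s hs

end AddSemigroup

theorem exists_seq_add_fSum_mem {S : Type*} [AddCommSemigroup S] {p : Ultrafilter S}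
    (hp : p + p = p) (hJ : ∀ B ∈ p, JSetAdd B) {A : Set S} (hA : A ∈ p) (y : ℕ → ℕ → S) :
    ∃ (a : ℕ → S) (H : ℕ → Finset ℕ) (B : ℕ → Set S),
      (∀ n, (H n).Nonempty) ∧ (∀ n, ∀ s ∈ H n, ∀ u ∈ H (n + 1), s < u) ∧ B 0 ⊆ A ∧
      ∀ n, B (n + 1) ⊆ B n ∧ ∀ l ≤ n,
        a n + fSum (H n) (y l) ∈ B n ∧ B (n + 1) ⊆ {z | a n + fSum (H n) (y l) + z ∈ B n} := by
  classical
  have hnext : ∀ (n : ℕ) (B : Set S) (m : ℕ), B ∈ p → ∃ (a : S) (H : Finset ℕ),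
      H.Nonempty ∧ (∀ t ∈ H, m < t) ∧ ∀ l ≤ n, a + fSum H (y l) ∈ B := by
    intro n B m hB
    obtain ⟨a, H, hH, hm, hmem⟩ :=
      (hJ B hB).exists_gt ((nonempty_range_add_one (n := n)).image y) m
    exact ⟨a, H, hH, hm, fun l hl => hmem _ (mem_image_of_mem y (mem_range_succ_iff.2 hl))⟩
  -- the state at stage `n` is `(B n, a n, H n)`
  let P : ℕ → Set S × S × Finset ℕ → Prop := fun n ⟨B, a, H⟩ =>
    p.IsStarSet B ∧ B ⊆ A ∧ H.Nonempty ∧ ∀ l ≤ n, a + fSum H (y l) ∈ B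
  let R : ℕ → Set S × S × Finset ℕ → Set S × S × Finset ℕ → Prop :=
    fun n ⟨B, a, H⟩ ⟨B', _, H'⟩ =>
      B' ⊆ B ∧ (∀ l ≤ n, B' ⊆ {z | a + fSum H (y l) + z ∈ B}) ∧ ∀ s ∈ H, ∀ u ∈ H', s < u
  have hstart : ∃ s, P 0 s := by
    have hA' := isStarSet_star hp hA
    obtain ⟨a, H, hH, -, hmem⟩ := hnext 0 _ 0 hA'.1
    exact ⟨(_, a, H), hA', Set.sep_subset _ _, hH, hmem⟩
  have hstep : ∀ n s, P n s → ∃ s', P (n + 1) s' ∧ R n s s' := by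
    rintro n ⟨B, a, H⟩ ⟨hB, hBA, hH, hmem⟩
    let X := (range (n + 1)).image fun l => a + fSum H (y l)
    have hX : ↑X ⊆ B := fun _ hx => by
      obtain ⟨l, hl, rfl⟩ := mem_image.1 hx
      exact hmem l (mem_range_succ_iff.1 hl)
    have hB' := hB.inter_biInter hX
    obtain ⟨a', H', hH', hlt, hmem'⟩ := hnext (n + 1) _ (H.max' hH) hB'.1
    refine ⟨(_, a', H'), ⟨hB', Set.inter_subset_left.trans hBA, hH', hmem'⟩,
      Set.inter_subset_left, fun l hl z hz => ?_,
      fun s hs u hu => (H.le_max' s hs).trans_lt (hlt u hu)⟩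
    exact Set.mem_iInter₂.1 hz.2 _ (mem_image_of_mem _ (mem_range_succ_iff.2 hl))
  obtain ⟨s, hs⟩ := exists_seq_of_exists_succ hstart hstep
  exact ⟨fun n => (s n).2.1, fun n => (s n).2.2, fun n => (s n).1, fun n => (hs n).1.2.2.1,
    fun n => (hs n).2.2.2, (hs 0).1.2.1,
    fun n => ⟨(hs n).2.1, fun l hl => ⟨(hs n).1.2.2.2 l hl, (hs n).2.2.1 l hl⟩⟩⟩

end Ultrafilter

theorem centralSetsTheorem_comm_general {S : Type*} [AddCommSemigroup S]
    (A : Set S) (hA : CentralAdd A) (y : ℕ → ℕ → S) :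
    ∃ (a : ℕ → S) (H : ℕ → Finset ℕ),
      (∀ n : ℕ, (H n).Nonempty) ∧
      (∀ n : ℕ, ∀ s ∈ H n, ∀ u ∈ H (n + 1), s < u) ∧
      ∀ f : ℕ → ℕ, (∀ n, f n ≤ n) →
        ∀ F : Finset ℕ, F.Nonempty →
          fSum F (fun n => a n + fSum (H n) (y (f n))) ∈ A := by
  obtain ⟨p, hp, hAp, hJ⟩ := hA.exists_idempotent_jSetAdd
  obtain ⟨a, H, B, hH, hHlt, hBA, hB⟩ := Ultrafilter.exists_seq_add_fSum_mem hp hJ hAp y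
  refine ⟨a, H, hH, hHlt, fun f hf F hF => hBA ?_⟩
  exact fSum_mem_of_forall_add_mem (antitone_nat_of_succ_le fun n => (hB n).1)
    (fun n => ((hB n).2 _ (hf n)).1) (fun n => ((hB n).2 _ (hf n)).2) hF fun _ _ => Nat.zero_le _

/-- the Central Sets Theorem for infinite commutative semigroups
with countably many sequences. -/
theorem centralSetsTheorem_comm {S : Type*} [AddCommSemigroup S] [Infinite S]
    (A : Set S) (hA : CentralAdd A) (y : ℕ → ℕ → S) :
    ∃ (a : ℕ → S) (H : ℕ → Finset ℕ),
      (∀ n : ℕ, (H n).Nonempty) ∧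
      (∀ n : ℕ, ∀ s ∈ H n, ∀ u ∈ H (n + 1), s < u) ∧
      ∀ f : ℕ → ℕ, (∀ n, f n ≤ n) →
        ∀ F : Finset ℕ, F.Nonempty →
          fSum F (fun n => a n + fSum (H n) (y (f n))) ∈ A :=
  centralSetsTheorem_comm_general A hA y
end
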